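/- For a weak totally associative ternary algebra (V,m), define for each p ≥ 1 the coboundary δᵖf(x1,...,x_{2p+1}) = m(x1,x2,f(x3,...,x_{2p+1})) + ∑_{i=1}^{p} (−1)ⁱ f(x1,...,m(x_{2i−1},x_{2i},x_{2i+1}),...,x_{2p+1}) + (−1)^{p+1} m(f(x1,...,x_{2p−1}),x_{2p},x_{2p+1}) on (2p−1)-linear maps f: V⊗^{2p−1}→V. Then δ^{p+1} ∘ δᵖ = 0 for all p ≥ 1. -/
import Mathlib


/-- The coboundary operator of a weak totally associative ternary algebra `(V, m)`,
sending a `q`-cochain `f : V^{⊗(2q+1)} → V` to the `(q+1)`-cochain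
`δf(x₁,…,x_{2q+3}) = m(x₁,x₂,f(x₃,…)) + ∑_{i=1}^{q+1} (−1)ⁱ f(x₁,…,m(x_{2i−1},x_{2i},x_{2i+1}),…)
 + (−1)^{q+2} m(f(x₁,…,x_{2q+1}), x_{2q+2}, x_{2q+3})`.
(With `p := q+1`, this is the operator `δᵖ` acting on `(2p−1)`-linear maps.) -/
def wDeltaP {K V : Type*} [Field K] [AddCommGroup V] [Module K V]
    (m : V →ₗ[K] V →ₗ[K] V →ₗ[K] V) (q : ℕ)
    (f : (Fin (2 * q + 1) → V) → V) : (Fin (2 * q + 3) → V) → V :=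
  fun x =>
    m (x ⟨0, by omega⟩) (x ⟨1, by omega⟩)
        (f fun j => x ⟨(j : ℕ) + 2, by have := j.isLt; omega⟩)
      + ∑ i ∈ Finset.Icc 1 (q + 1),
          ((-1 : ℤ) ^ i) •
            f (fun j : Fin (2 * q + 1) =>
              if (j : ℕ) + 2 < 2 * i then x ⟨(j : ℕ), by have := j.isLt; omega⟩
              else if (j : ℕ) + 2 = 2 * i then
                m (x ⟨(j : ℕ), by have := j.isLt; omega⟩)
                  (x ⟨(j : ℕ) + 1, by have := j.isLt; omega⟩)
                  (x ⟨(j : ℕ) + 2, by have := j.isLt; omega⟩)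
              else x ⟨(j : ℕ) + 2, by have := j.isLt; omega⟩)
      + ((-1 : ℤ) ^ (q + 2)) •
          m (f fun j => x ⟨(j : ℕ), by have := j.isLt; omega⟩)
            (x ⟨2 * q + 1, by omega⟩) (x ⟨2 * q + 2, by omega⟩)

section Aux

variable {K V : Type*} [Field K] [AddCommGroup V] [Module K V]
  (m : V →ₗ[K] V →ₗ[K] V →ₗ[K] V)

def wIns {n : ℕ} (i : ℕ) (x : Fin (n+2) → V) : Fin n → V := fun j =>
  if (j:ℕ)+2 < 2*i then x ⟨(j:ℕ), by have := j.isLt; omega⟩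
  else if (j:ℕ)+2 = 2*i then
    m (x ⟨(j:ℕ), by have := j.isLt; omega⟩) (x ⟨(j:ℕ)+1, by have := j.isLt; omega⟩)
      (x ⟨(j:ℕ)+2, by have := j.isLt; omega⟩)
  else x ⟨(j:ℕ)+2, by have := j.isLt; omega⟩

def wSh {V : Type*} {n : ℕ} (x : Fin (n+2) → V) : Fin n → V :=
  fun j => x ⟨(j:ℕ)+2, by have := j.isLt; omega⟩

def wTr {V : Type*} {n : ℕ} (x : Fin (n+2) → V) : Fin n → V :=
  fun j => x ⟨(j:ℕ), by have := j.isLt; omega⟩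

lemma wDeltaP_eq (q : ℕ) (f : (Fin (2 * q + 1) → V) → V) (x : Fin (2*q+1+2) → V) :
    wDeltaP m q f x =
      m (x ⟨0, by omega⟩) (x ⟨1, by omega⟩) (f (wSh x))
        + ∑ i ∈ Finset.Icc 1 (q + 1), ((-1 : ℤ) ^ i) • f (wIns m i x)
        + ((-1 : ℤ) ^ (q + 2)) •
            m (f (wTr x)) (x ⟨2 * q + 1, by omega⟩) (x ⟨2 * q + 2, by omega⟩) := rfl

lemma wIns_mk_lt {n : ℕ} (i : ℕ) (x : Fin (n+2) → V) {a : ℕ} (ha : a < n)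
    (h : a + 2 < 2*i) : wIns m i x ⟨a, ha⟩ = x ⟨a, by omega⟩ := by
  simp only [wIns, Fin.val_mk]
  rw [if_pos h]

lemma wIns_mk_eq {n : ℕ} (i : ℕ) (x : Fin (n+2) → V) {a : ℕ} (ha : a < n)
    (h : a + 2 = 2*i) :
    wIns m i x ⟨a, ha⟩ =
      m (x ⟨a, by omega⟩) (x ⟨a+1, by omega⟩) (x ⟨a+2, by omega⟩) := by
  simp only [wIns, Fin.val_mk]
  rw [if_neg (by omega), if_pos h]

lemma wIns_mk_gt {n : ℕ} (i : ℕ) (x : Fin (n+2) → V) {a : ℕ} (ha : a < n)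
    (h : 2*i < a + 2) : wIns m i x ⟨a, ha⟩ = x ⟨a+2, by omega⟩ := by
  simp only [wIns, Fin.val_mk]
  rw [if_neg (by omega), if_neg (by omega)]

lemma wSh_wIns {n : ℕ} (i : ℕ) (x : Fin (n+2+2) → V) :
    wSh (wIns m (i+1) x) = wIns m i (wSh x) := by
  funext j
  simp only [wIns, wSh, Fin.val_mk]
  split_ifs <;>
    first
      | rfl
      | omega
      | (exact congrArg x (Fin.ext (by simp <;> omega)))
      | (congr 1 <;> first
          | rfl
          | (exact congrArg x (Fin.ext (by simp <;> omega)))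
          | (congr 1 <;> first | rfl | exact congrArg x (Fin.ext (by simp <;> omega))))

lemma wTr_wIns {n : ℕ} (i : ℕ) (x : Fin (n+2+2) → V) :
    wTr (wIns m i x) = wIns m i (wTr x) := by
  funext j
  simp only [wIns, wTr, Fin.val_mk]

lemma wSh_wIns_one {n : ℕ} (x : Fin (n+2+2) → V) :
    wSh (wIns m 1 x) = wSh (wSh x) := by
  funext j
  simp only [wIns, wSh, Fin.val_mk]
  rw [if_neg (by omega), if_neg (by omega)]

lemma wIns_large {n : ℕ} {i : ℕ} (x : Fin (n+2) → V) (h : n + 1 < 2*i) :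
    wIns m i x = wTr x := by
  funext j
  simp only [wIns, wTr, Fin.val_mk]
  rw [if_pos (by have := j.isLt; omega)]

set_option maxHeartbeats 1000000 in
lemma wIns_comm (hw : ∀ x1 x2 x3 x4 x5 : V, m (m x1 x2 x3) x4 x5 = m x1 x2 (m x3 x4 x5))
    {n : ℕ} (x : Fin (n+2+2) → V) {i k : ℕ} (hk : 1 ≤ k) (hik : k ≤ i) :
    wIns m k (wIns m (i+1) x) = wIns m i (wIns m k x) := by
  funext j
  simp only [wIns, Fin.val_mk]
  split_ifs <;>
    first
      | rfl
      | omega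
      | (exact congrArg x (Fin.ext (by simp <;> omega)))
      | (exact (hw _ _ _ _ _))
      | (exact (hw _ _ _ _ _).symm)
      | (congr 1 <;> first
          | rfl
          | (exact congrArg x (Fin.ext (by simp <;> omega)))
          | (congr 1 <;> first | rfl | exact congrArg x (Fin.ext (by simp <;> omega))))

end Aux

section Aux2

variable {K V : Type*} [Field K] [AddCommGroup V] [Module K V]
  (m : V →ₗ[K] V →ₗ[K] V →ₗ[K] V)

lemma cancel_aux {V : Type*} [AddCommGroup V] {a b : ℤ} {v w : V}
    (hv : v = w) (hab : a + b = 0) : a • v + b • w = 0 := by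
  rw [hv, ← add_smul, hab, zero_smul]

lemma cancel_aux1 {V : Type*} [AddCommGroup V] {a : ℤ} {v w : V}
    (hv : v = w) (ha : a = -1) : v + a • w = 0 := by
  rw [hv, ha]; simp

lemma rearr {M : Type*} [AddCommGroup M] (a1 a2 a3 b1 b2 b3 b4 b5 c1 c2 c3 : M)
    (h1 : a1 + b1 = 0) (h2 : a2 + b2 = 0) (h3 : a3 + c1 = 0) (h4 : b3 = 0)
    (h5 : b4 + c2 = 0) (h6 : b5 + c3 = 0) :
    (a1 + a2 + a3) + ((b1 + b2) + b3 + (b4 + b5)) + (c1 + c2 + c3) = 0 := by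
  have h : (a1 + a2 + a3) + ((b1 + b2) + b3 + (b4 + b5)) + (c1 + c2 + c3)
      = (a1 + b1) + (a2 + b2) + (a3 + c1) + b3 + (b4 + c2) + (b5 + c3) := by abel
  rw [h, h1, h2, h3, h4, h5, h6]; simp

lemma sum_shift {M : Type*} [AddCommMonoid M] (g : ℕ → M) :
    ∀ n : ℕ, ∑ i ∈ Finset.Icc 1 (n+1), g i = g 1 + ∑ k ∈ Finset.Icc 1 n, g (k+1)
  | 0 => by simp
  | (n+1) => by
    rw [Finset.sum_Icc_succ_top (by omega), sum_shift g n,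
      Finset.sum_Icc_succ_top (a := 1) (b := n) (by omega), add_assoc]

lemma dsum_zero (hw : ∀ x1 x2 x3 x4 x5 : V, m (m x1 x2 x3) x4 x5 = m x1 x2 (m x3 x4 x5))
    (q : ℕ) (f : (Fin (2*q+1) → V) → V) (x : Fin (2*q+1+2+2) → V) :
    ∑ i ∈ Finset.Icc 1 (q+1+1), ∑ k ∈ Finset.Icc 1 (q+1),
      ((-1:ℤ)^i * (-1:ℤ)^k) • f (wIns m k (wIns m i x)) = 0 := by
  rw [← Finset.sum_product']
  rw [← Finset.sum_filter_add_sum_filter_not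
    (Finset.Icc 1 (q+1+1) ×ˢ Finset.Icc 1 (q+1)) (fun p => p.2 < p.1)]
  have h : ∑ p ∈ (Finset.Icc 1 (q+1+1) ×ˢ Finset.Icc 1 (q+1)).filter (fun p => ¬ p.2 < p.1),
      ((-1:ℤ)^p.1 * (-1:ℤ)^p.2) • f (wIns m p.2 (wIns m p.1 x))
      = ∑ p ∈ (Finset.Icc 1 (q+1+1) ×ˢ Finset.Icc 1 (q+1)).filter (fun p => p.2 < p.1),
        (-(((-1:ℤ)^p.1 * (-1:ℤ)^p.2) • f (wIns m p.2 (wIns m p.1 x)))) := by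
    apply Finset.sum_nbij' (i := fun p : ℕ × ℕ => (p.2 + 1, p.1))
      (j := fun p : ℕ × ℕ => (p.2, p.1 - 1))
    · intro a ha
      obtain ⟨a1, a2⟩ := a
      simp only [Finset.mem_filter, Finset.mem_product, Finset.mem_Icc, not_lt] at ha ⊢
      omega
    · intro a ha
      obtain ⟨a1, a2⟩ := a
      simp only [Finset.mem_filter, Finset.mem_product, Finset.mem_Icc, not_lt] at ha ⊢
      omega
    · intro a ha
      obtain ⟨a1, a2⟩ := a
      simp only [Finset.mem_filter, Finset.mem_product, Finset.mem_Icc, not_lt] at ha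
      dsimp only
      simp only [Prod.mk.injEq]
      refine ⟨?_, ?_⟩ <;> first | trivial | omega
    · intro a ha
      obtain ⟨a1, a2⟩ := a
      simp only [Finset.mem_filter, Finset.mem_product, Finset.mem_Icc, not_lt] at ha
      dsimp only
      simp only [Prod.mk.injEq]
      refine ⟨?_, ?_⟩ <;> first | trivial | omega
    · intro a ha
      obtain ⟨a1, a2⟩ := a
      simp only [Finset.mem_filter, Finset.mem_product, Finset.mem_Icc] at ha
      dsimp only
      rw [wIns_comm m hw x (by omega : 1 ≤ a1) (by omega : a1 ≤ a2)]
      rw [← neg_smul]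
      congr 1
      ring
  rw [h, Finset.sum_neg_distrib]
  exact add_neg_cancel _

end Aux2


theorem stmt12 {K V : Type*} [Field K] [CharZero K] [AddCommGroup V] [Module K V]
    (m : V →ₗ[K] V →ₗ[K] V →ₗ[K] V)
    (hw : ∀ x1 x2 x3 x4 x5 : V, m (m x1 x2 x3) x4 x5 = m x1 x2 (m x3 x4 x5))
    (q : ℕ) (f : (Fin (2 * q + 1) → V) → V) (x : Fin (2 * (q + 1) + 3) → V) :
    wDeltaP m (q + 1) (wDeltaP m q f) x = 0 := by
  have e0 : wDeltaP m (q + 1) (wDeltaP m q f) x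
      = m (x ⟨0, by omega⟩) (x ⟨1, by omega⟩) (wDeltaP m q f (wSh (n := 2*q+1+2) x))
        + (∑ i ∈ Finset.Icc 1 (q+1+1), ((-1:ℤ)^i) • wDeltaP m q f (wIns m (n := 2*q+1+2) (i) x))
        + ((-1:ℤ)^(q+1+2)) • m (wDeltaP m q f (wTr (n := 2*q+1+2) x)) (x ⟨2*q+1+2, by omega⟩) (x ⟨2*q+2+2, by omega⟩) :=
    wDeltaP_eq m (q+1) (wDeltaP m q f) x
  have e1 : m (x ⟨0, by omega⟩) (x ⟨1, by omega⟩) (wDeltaP m q f (wSh (n := 2*q+1+2) x))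
      = m (x ⟨0, by omega⟩) (x ⟨1, by omega⟩) (m (x ⟨2, by omega⟩) (x ⟨3, by omega⟩) (f (wSh (n := 2*q+1) (wSh (n := 2*q+1+2) x)))) + (∑ k ∈ Finset.Icc 1 (q+1), ((-1:ℤ)^k) • m (x ⟨0, by omega⟩) (x ⟨1, by omega⟩) (f (wIns m (n := 2*q+1) (k) (wSh (n := 2*q+1+2) x)))) + ((-1:ℤ)^(q+2)) • m (x ⟨0, by omega⟩) (x ⟨1, by omega⟩) (m (f (wSh (n := 2*q+1) (wTr (n := 2*q+1+2) x))) (x ⟨2*q+1+2, by omega⟩) (x ⟨2*q+2+2, by omega⟩)) := by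
    rw [wDeltaP_eq m q f]
    simp only [map_add, map_sum, map_zsmul]
    rfl
  have e2 : (∑ i ∈ Finset.Icc 1 (q+1+1), ((-1:ℤ)^i) • wDeltaP m q f (wIns m (n := 2*q+1+2) (i) x))
      = (∑ i ∈ Finset.Icc 1 (q+1+1), ((-1:ℤ)^(i)) • m (wIns m (n := 2*q+1+2) (i) x ⟨0, by omega⟩) (wIns m (n := 2*q+1+2) (i) x ⟨1, by omega⟩) (f (wSh (n := 2*q+1) (wIns m (n := 2*q+1+2) (i) x)))) + (∑ i ∈ Finset.Icc 1 (q+1+1), ∑ k ∈ Finset.Icc 1 (q+1), ((-1:ℤ)^i * (-1:ℤ)^k) • f (wIns m (n := 2*q+1) (k) (wIns m (n := 2*q+1+2) (i) x))) + (∑ i ∈ Finset.Icc 1 (q+1+1), ((-1:ℤ)^(i) * (-1:ℤ)^(q+2)) • m (f (wTr (n := 2*q+1) (wIns m (n := 2*q+1+2) (i) x))) (wIns m (n := 2*q+1+2) (i) x ⟨2*q+1, by omega⟩) (wIns m (n := 2*q+1+2) (i) x ⟨2*q+2, by omega⟩)) := by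
    simp only [wDeltaP_eq m q f, smul_add, Finset.smul_sum, smul_smul, Finset.sum_add_distrib]
  have e3 : ((-1:ℤ)^(q+1+2)) • m (wDeltaP m q f (wTr (n := 2*q+1+2) x)) (x ⟨2*q+1+2, by omega⟩) (x ⟨2*q+2+2, by omega⟩)
      = ((-1:ℤ)^(q+1+2)) • m (m (x ⟨0, by omega⟩) (x ⟨1, by omega⟩) (f (wSh (n := 2*q+1) (wTr (n := 2*q+1+2) x)))) (x ⟨2*q+1+2, by omega⟩) (x ⟨2*q+2+2, by omega⟩) + (∑ k ∈ Finset.Icc 1 (q+1), ((-1:ℤ)^(q+1+2) * (-1:ℤ)^k) • m (f (wIns m (n := 2*q+1) (k) (wTr (n := 2*q+1+2) x))) (x ⟨2*q+1+2, by omega⟩) (x ⟨2*q+2+2, by omega⟩)) + ((-1:ℤ)^(q+1+2) * (-1:ℤ)^(q+2)) • m (m (f (wTr (n := 2*q+1) (wTr (n := 2*q+1+2) x))) (x ⟨2*q+1, by omega⟩) (x ⟨2*q+2, by omega⟩)) (x ⟨2*q+1+2, by omega⟩) (x ⟨2*q+2+2, by omega⟩) := by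
    rw [wDeltaP_eq m q f]
    simp only [map_add, map_sum, map_zsmul, LinearMap.add_apply, LinearMap.sum_apply,
      LinearMap.smul_apply, smul_add, Finset.smul_sum, smul_smul]
    rfl
  have eBa : (∑ i ∈ Finset.Icc 1 (q+1+1), ((-1:ℤ)^(i)) • m (wIns m (n := 2*q+1+2) (i) x ⟨0, by omega⟩) (wIns m (n := 2*q+1+2) (i) x ⟨1, by omega⟩) (f (wSh (n := 2*q+1) (wIns m (n := 2*q+1+2) (i) x)))) = ((-1:ℤ)^(1)) • m (wIns m (n := 2*q+1+2) (1) x ⟨0, by omega⟩) (wIns m (n := 2*q+1+2) (1) x ⟨1, by omega⟩) (f (wSh (n := 2*q+1) (wIns m (n := 2*q+1+2) (1) x))) + (∑ k ∈ Finset.Icc 1 (q+1), ((-1:ℤ)^(k+1)) • m (wIns m (n := 2*q+1+2) (k+1) x ⟨0, by omega⟩) (wIns m (n := 2*q+1+2) (k+1) x ⟨1, by omega⟩) (f (wSh (n := 2*q+1) (wIns m (n := 2*q+1+2) (k+1) x)))) := sum_shift _ (q+1)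
  have eBc : (∑ i ∈ Finset.Icc 1 (q+1+1), ((-1:ℤ)^(i) * (-1:ℤ)^(q+2)) • m (f (wTr (n := 2*q+1) (wIns m (n := 2*q+1+2) (i) x))) (wIns m (n := 2*q+1+2) (i) x ⟨2*q+1, by omega⟩) (wIns m (n := 2*q+1+2) (i) x ⟨2*q+2, by omega⟩)) = (∑ i ∈ Finset.Icc 1 (q+1), ((-1:ℤ)^(i) * (-1:ℤ)^(q+2)) • m (f (wTr (n := 2*q+1) (wIns m (n := 2*q+1+2) (i) x))) (wIns m (n := 2*q+1+2) (i) x ⟨2*q+1, by omega⟩) (wIns m (n := 2*q+1+2) (i) x ⟨2*q+2, by omega⟩)) + ((-1:ℤ)^(q+1+1) * (-1:ℤ)^(q+2)) • m (f (wTr (n := 2*q+1) (wIns m (n := 2*q+1+2) (q+1+1) x))) (wIns m (n := 2*q+1+2) (q+1+1) x ⟨2*q+1, by omega⟩) (wIns m (n := 2*q+1+2) (q+1+1) x ⟨2*q+2, by omega⟩) := Finset.sum_Icc_succ_top (by omega) _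
  have z1 : m (x ⟨0, by omega⟩) (x ⟨1, by omega⟩) (m (x ⟨2, by omega⟩) (x ⟨3, by omega⟩) (f (wSh (n := 2*q+1) (wSh (n := 2*q+1+2) x)))) + ((-1:ℤ)^(1)) • m (wIns m (n := 2*q+1+2) (1) x ⟨0, by omega⟩) (wIns m (n := 2*q+1+2) (1) x ⟨1, by omega⟩) (f (wSh (n := 2*q+1) (wIns m (n := 2*q+1+2) (1) x))) = 0 := by
    rw [wIns_mk_eq m (n := 2*q+1+2) 1 x (a := 0) (by omega) (by norm_num),
      wIns_mk_gt m (n := 2*q+1+2) 1 x (a := 1) (by omega) (by norm_num),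
      wSh_wIns_one m (n := 2*q+1) x, hw]
    exact cancel_aux1 rfl (by norm_num)
  have z2 : (∑ k ∈ Finset.Icc 1 (q+1), ((-1:ℤ)^k) • m (x ⟨0, by omega⟩) (x ⟨1, by omega⟩) (f (wIns m (n := 2*q+1) (k) (wSh (n := 2*q+1+2) x)))) + (∑ k ∈ Finset.Icc 1 (q+1), ((-1:ℤ)^(k+1)) • m (wIns m (n := 2*q+1+2) (k+1) x ⟨0, by omega⟩) (wIns m (n := 2*q+1+2) (k+1) x ⟨1, by omega⟩) (f (wSh (n := 2*q+1) (wIns m (n := 2*q+1+2) (k+1) x)))) = 0 := by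
    rw [← Finset.sum_add_distrib]
    apply Finset.sum_eq_zero
    intro k hk
    rw [Finset.mem_Icc] at hk
    rw [wIns_mk_lt m (n := 2*q+1+2) (k+1) x (a := 0) (by omega) (by omega),
      wIns_mk_lt m (n := 2*q+1+2) (k+1) x (a := 1) (by omega) (by omega),
      wSh_wIns m (n := 2*q+1) k x]
    exact cancel_aux rfl (by ring)
  have z3 : ((-1:ℤ)^(q+2)) • m (x ⟨0, by omega⟩) (x ⟨1, by omega⟩) (m (f (wSh (n := 2*q+1) (wTr (n := 2*q+1+2) x))) (x ⟨2*q+1+2, by omega⟩) (x ⟨2*q+2+2, by omega⟩)) + ((-1:ℤ)^(q+1+2)) • m (m (x ⟨0, by omega⟩) (x ⟨1, by omega⟩) (f (wSh (n := 2*q+1) (wTr (n := 2*q+1+2) x)))) (x ⟨2*q+1+2, by omega⟩) (x ⟨2*q+2+2, by omega⟩) = 0 := by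
    rw [hw]
    exact cancel_aux rfl (by ring)
  have z4 : (∑ i ∈ Finset.Icc 1 (q+1), ((-1:ℤ)^(i) * (-1:ℤ)^(q+2)) • m (f (wTr (n := 2*q+1) (wIns m (n := 2*q+1+2) (i) x))) (wIns m (n := 2*q+1+2) (i) x ⟨2*q+1, by omega⟩) (wIns m (n := 2*q+1+2) (i) x ⟨2*q+2, by omega⟩)) + (∑ k ∈ Finset.Icc 1 (q+1), ((-1:ℤ)^(q+1+2) * (-1:ℤ)^k) • m (f (wIns m (n := 2*q+1) (k) (wTr (n := 2*q+1+2) x))) (x ⟨2*q+1+2, by omega⟩) (x ⟨2*q+2+2, by omega⟩)) = 0 := by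
    rw [← Finset.sum_add_distrib]
    apply Finset.sum_eq_zero
    intro k hk
    rw [Finset.mem_Icc] at hk
    rw [wTr_wIns m (n := 2*q+1) k x,
      wIns_mk_gt m (n := 2*q+1+2) k x (a := 2*q+1) (by omega) (by omega),
      wIns_mk_gt m (n := 2*q+1+2) k x (a := 2*q+2) (by omega) (by omega)]
    exact cancel_aux rfl (by ring)
  have z5 : ((-1:ℤ)^(q+1+1) * (-1:ℤ)^(q+2)) • m (f (wTr (n := 2*q+1) (wIns m (n := 2*q+1+2) (q+1+1) x))) (wIns m (n := 2*q+1+2) (q+1+1) x ⟨2*q+1, by omega⟩) (wIns m (n := 2*q+1+2) (q+1+1) x ⟨2*q+2, by omega⟩) + ((-1:ℤ)^(q+1+2) * (-1:ℤ)^(q+2)) • m (m (f (wTr (n := 2*q+1) (wTr (n := 2*q+1+2) x))) (x ⟨2*q+1, by omega⟩) (x ⟨2*q+2, by omega⟩)) (x ⟨2*q+1+2, by omega⟩) (x ⟨2*q+2+2, by omega⟩) = 0 := by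
    rw [wTr_wIns m (n := 2*q+1) (q+1+1) x,
      wIns_large m (i := q+1+1) (wTr (n := 2*q+1+2) x) (by omega),
      wIns_mk_lt m (n := 2*q+1+2) (q+1+1) x (a := 2*q+1) (by omega) (by omega),
      wIns_mk_eq m (n := 2*q+1+2) (q+1+1) x (a := 2*q+2) (by omega) (by omega),
      hw]
    exact cancel_aux rfl (by ring)
  have z6 : (∑ i ∈ Finset.Icc 1 (q+1+1), ∑ k ∈ Finset.Icc 1 (q+1), ((-1:ℤ)^i * (-1:ℤ)^k) • f (wIns m (n := 2*q+1) (k) (wIns m (n := 2*q+1+2) (i) x))) = 0 := dsum_zero m hw q f x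
  rw [e0, e1, e2, e3, eBa, eBc]
  exact rearr _ _ _ _ _ _ _ _ _ _ _ z1 z2 z3 z6 z4 z5
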